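/- Let H be a complex Hilbert space and let κ : ℝ → (H →L[ℂ] H) be a 1-periodic strongly continuous one-parameter group of unitary operators on H. Let Z : H →L[ℂ] H be a bounded linear operator, let φ belong to the invariant subspace V₀ = {φ ∈ H : κ_t φ = φ for all t ∈ ℝ}, and set ψ = Zφ. Assume that the map t ↦ κ_{-t} ψ is differentiable on ℝ with derivative bounded in norm by a constant M ≥ 0. Then the associated invariant operator Z̃φ = ∫_{t ∈ [0,1]} κ_{-t}(Z(κ_t φ)) dt satisfies ‖Z̃φ − Zφ‖ ≤ M/2. -/

import Mathlib

/-!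
For invariant `φ` the integrand is `κ_{-t}(Zφ)`, a curve `g` starting at `g 0 = Zφ` with speed at
most `M`. The mean value inequality gives `‖g t - g 0‖ ≤ M t`, and averaging over `[0, 1]` gives
`∫₀¹ M t dt = M / 2`.
-/

open MeasureTheory Set

theorem norm_setIntegral_Icc_zero_one_sub_le
    {E : Type*} [NormedAddCommGroup E] [NormedSpace ℝ E] [CompleteSpace E]
    {g g' : ℝ → E} {M : ℝ}
    (hg : ∀ t ∈ Icc (0 : ℝ) 1, HasDerivWithinAt g (g' t) (Icc 0 1) t)
    (hg' : ∀ t ∈ Icc (0 : ℝ) 1, ‖g' t‖ ≤ M) :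
    ‖(∫ t in Icc (0 : ℝ) 1, g t) - g 0‖ ≤ M / 2 := by
  have hdist : ∀ t ∈ Icc (0 : ℝ) 1, ‖g t - g 0‖ ≤ M * t := fun t ht => by
    simpa [abs_of_nonneg ht.1] using
      (convex_Icc (0 : ℝ) 1).norm_image_sub_le_of_norm_hasDerivWithin_le hg hg'
        (left_mem_Icc.2 zero_le_one) ht
  have hint : IntegrableOn g (Icc (0 : ℝ) 1) :=
    (HasDerivWithinAt.continuousOn hg).integrableOn_Icc
  have hsub : (∫ t in Icc (0 : ℝ) 1, g t) - g 0 = ∫ t in Icc (0 : ℝ) 1, (g t - g 0) := by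
    rw [integral_sub hint (integrableOn_const (by simp) (by simp))]
    simp
  rw [hsub]
  calc ‖∫ t in Icc (0 : ℝ) 1, (g t - g 0)‖
      ≤ ∫ t in Icc (0 : ℝ) 1, M * t :=
        norm_integral_le_of_norm_le (continuous_const.mul continuous_id).integrableOn_Icc
          ((ae_restrict_mem measurableSet_Icc).mono hdist)
    _ = M / 2 := by
        rw [integral_Icc_eq_integral_Ioc, ← intervalIntegral.integral_of_le zero_le_one,
          intervalIntegral.integral_const_mul, integral_id]
        ring

theorem associated_invariant_operator_estimate_general
    {H : Type*} [NormedAddCommGroup H] [InnerProductSpace ℂ H] [CompleteSpace H]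
    (κ : ℝ → (H →L[ℂ] H))
    (hκ0 : κ 0 = ContinuousLinearMap.id ℂ H)
    (Z : H →L[ℂ] H) (φ : H)
    (hφ : ∀ t : ℝ, κ t φ = φ)
    (M : ℝ)
    (f' : ℝ → H)
    (hderiv : ∀ t : ℝ, HasDerivAt (fun s : ℝ => κ (-s) (Z φ)) (f' t) t)
    (hbound : ∀ t : ℝ, ‖f' t‖ ≤ M) :
    ‖(∫ t in Set.Icc (0:ℝ) 1, κ (-t) (Z (κ t φ))) - Z φ‖ ≤ M / 2 := by
  simp only [hφ]
  simpa [hκ0] using norm_setIntegral_Icc_zero_one_sub_le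
    (fun t _ => (hderiv t).hasDerivWithinAt) (fun t _ => hbound t)

/-- For `φ` in the invariant subspace `V₀` and `ψ = Z φ`, if
`t ↦ κ_{-t} ψ` is differentiable on `ℝ` with derivative bounded in norm by `M ≥ 0`,
then the associated invariant operator satisfies `‖Z̃ φ − Z φ‖ ≤ M / 2`. -/
theorem associated_invariant_operator_estimate
    {H : Type*} [NormedAddCommGroup H] [InnerProductSpace ℂ H] [CompleteSpace H]
    (κ : ℝ → (H →L[ℂ] H))
    (hκ0 : κ 0 = ContinuousLinearMap.id ℂ H)
    (hκadd : ∀ s t : ℝ, κ (s + t) = (κ s).comp (κ t))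
    (hκper : ∀ t : ℝ, κ (t + 1) = κ t)
    (hκiso : ∀ (t : ℝ) (x : H), ‖κ t x‖ = ‖x‖)
    (hκsurj : ∀ t : ℝ, Function.Surjective (κ t))
    (hκcont : ∀ φ : H, Continuous fun t : ℝ => κ t φ)
    (Z : H →L[ℂ] H) (φ : H)
    (hφ : ∀ t : ℝ, κ t φ = φ)
    (M : ℝ) (hM : 0 ≤ M)
    (f' : ℝ → H)
    (hderiv : ∀ t : ℝ, HasDerivAt (fun s : ℝ => κ (-s) (Z φ)) (f' t) t)
    (hbound : ∀ t : ℝ, ‖f' t‖ ≤ M) :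
    ‖(∫ t in Set.Icc (0:ℝ) 1, κ (-t) (Z (κ t φ))) - Z φ‖ ≤ M / 2 :=
  associated_invariant_operator_estimate_general κ hκ0 Z φ hφ M f' hderiv hbound
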